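/- For i.i.d. blocks with codeword lengths satisfying N·Ĥ(x̂|ŷ) ≤ l(x,y) ≤ N·(Ĥ(x|y) + ε_N) (empirical conditional entropy plus vanishing overhead ε_N ≤ (2 + |𝒳||𝒴|log₂(N+1))/N), for any r with H(p_{X|Y}) < r < log₂|𝒳| and any ε > 0 there exist N and K < ∞ such that for all n ≥ 1, P(Σ_{i=1}^n l(X⃗_i, Y⃗_i) > nNr) ≤ K·2^{−nN(E^u_{si,b}(r) − ε)}, where E^u_{si,b}(r) = min_{q: H(q_{X|Y}) ≥ r} D(q_{XY}‖p_{XY}). -/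

import Mathlib

/-!
Method of types. Conditional entropy is superadditive and homogeneous on nonnegative weights, so
if the `n` block lengths add up to more than `nNr`, the joint type `q̂` of all `nN` symbols has
`H(q̂_{X|Y}) > r - ε_N`. A sequence of type `q̂` has probability `q̂^{nN}(w) · 2^{-nN D(q̂‖p)}`, and
the sums of `q̂^{nN}(w)` over the sequences of each type are at most `1`, so the type classes
contribute a factor of at most `(nN + 1)^{|𝒳||𝒴|}`. Compactness of the simplex and continuity of
`H` and `D` give `δ > 0` with `D(q‖p) > E(r) - ε/2` whenever `H(q_{X|Y}) ≥ r - δ`; `N` is chosen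
with `ε_N ≤ δ`, and the polynomial factor is absorbed into `K · 2^{nNε/2}`.
-/

open scoped Classical

/-- Conditional Shannon entropy `H(X|Y)` (in bits) of a joint pmf on `𝒳 × 𝒴`. -/
noncomputable def condEnt {𝒳 𝒴 : Type*} [Fintype 𝒳] [Fintype 𝒴] (q : 𝒳 × 𝒴 → ℝ) : ℝ :=
  -∑ z : 𝒳 × 𝒴, q z * Real.logb 2 (q z / ∑ x, q (x, z.2))

/-- KL divergence (in bits) between pmfs on a finite set. -/
noncomputable def klDiv {α : Type*} [Fintype α] (q p : α → ℝ) : ℝ :=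
  ∑ a, q a * Real.logb 2 (q a / p a)

/-- The empirical joint distribution of a length-`N` block of symbol pairs. -/
noncomputable def empDist {𝒳 𝒴 : Type*} [Fintype 𝒳] [Fintype 𝒴] {N : ℕ}
    (xv : Fin N → 𝒳) (yv : Fin N → 𝒴) (z : 𝒳 × 𝒴) : ℝ :=
  ((Finset.univ.filter (fun i => (xv i, yv i) = z)).card : ℝ) / (N : ℝ)

open Finset Real Filter Topology
open scoped Nat

theorem Real.mul_log_div_add_le {a b c d : ℝ} (ha : 0 ≤ a) (hab : a ≤ b) (hc : 0 ≤ c)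
    (hcd : c ≤ d) : (a + c) * log ((a + c) / (b + d)) ≤ a * log (a / b) + c * log (c / d) := by
  rcases (ha.trans hab).eq_or_lt with rfl | hb
  · simp [le_antisymm hab ha]
  rcases (hc.trans hcd).eq_or_lt with rfl | hd
  · simp [le_antisymm hcd hc]
  have hbd : 0 < b + d := by positivity
  have h := convexOn_mul_log.2 (Set.mem_Ici.2 (div_nonneg ha hb.le))
    (Set.mem_Ici.2 (div_nonneg hc hd.le)) (div_nonneg hb.le hbd.le) (div_nonneg hd.le hbd.le)
    (by field_simp)
  have hmix : b / (b + d) * (a / b) + d / (b + d) * (c / d) = (a + c) / (b + d) := by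
    field_simp
  simp only [smul_eq_mul, hmix] at h
  have := mul_le_mul_of_nonneg_left h hbd.le
  field_simp at this
  linarith

theorem Real.sub_le_mul_log_div {a b : ℝ} (ha : 0 ≤ a) (hb : 0 ≤ b) (hab : b = 0 → a = 0) :
    a - b ≤ a * log (a / b) := by
  rcases ha.eq_or_lt with rfl | ha
  · simpa using hb
  have hb : 0 < b := hb.lt_of_ne fun h => ha.ne' (hab h.symm)
  have h := mul_le_mul_of_nonneg_left (one_sub_inv_le_log_of_pos (div_pos ha hb)) ha.le
  rwa [inv_div, mul_sub, mul_one, mul_div_cancel₀ _ ha.ne'] at h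

theorem continuous_mul_logb_div (b c : ℝ) : Continuous fun x => x * logb b (x / c) := by
  rcases eq_or_ne c 0 with rfl | hc
  · simpa using continuous_const -- `x / 0 = 0` and `logb b 0 = 0`
  have h : (fun x => x * logb b (x / c)) = fun x => (x * log x - x * log c) / log b := by
    ext x
    rcases eq_or_ne x 0 with rfl | hx
    · simp
    rw [logb, log_div hx hc]; ring
  rw [h]
  exact (continuous_mul_log.sub (continuous_id.mul continuous_const)).div_const _

theorem exists_add_one_pow_le_mul_two_rpow (d : ℕ) {η : ℝ} (hη : 0 < η) :
    ∃ C, ∀ x : ℝ, 0 ≤ x → (x + 1) ^ d ≤ C * 2 ^ (η * x) := by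
  set a := η * log 2 with ha_def
  have ha : 0 < a := mul_pos hη (log_pos one_lt_two)
  refine ⟨d ! * 2 ^ η / a ^ d, fun x hx => ?_⟩
  have h := pow_div_factorial_le_exp _ (mul_nonneg ha.le (by linarith : 0 ≤ x + 1)) d
  have hexp : exp (a * (x + 1)) = 2 ^ η * 2 ^ (η * x) := by
    rw [← rpow_add two_pos, rpow_def_of_pos two_pos, ha_def]
    ring_nf
  rw [hexp, mul_pow, div_le_iff₀ (by positivity)] at h
  rw [div_mul_eq_mul_div, le_div_iff₀ (by positivity)]
  linarith

theorem tendsto_add_mul_logb_add_one_div_atTop (b c : ℝ) :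
    Tendsto (fun x : ℝ => (b + c * logb 2 (x + 1)) / x) atTop (𝓝 0) := by
  have hlog : Tendsto (fun x : ℝ => log (x + 1) / x) atTop (𝓝 0) := by
    refine ((tendsto_pow_log_div_mul_add_atTop 1 (-1) 1 one_ne_zero).comp
      (tendsto_atTop_add_const_right atTop 1 tendsto_id)).congr fun x => ?_
    simp
  have h := (tendsto_const_nhds (x := b).div_atTop tendsto_id).add (hlog.const_mul (c / log 2))
  rw [mul_zero, add_zero] at h
  refine h.congr fun x => ?_
  simp only [id, logb]
  ring

theorem exists_pos_add_mul_logb_div_le (b c : ℝ) {δ : ℝ} (hδ : 0 < δ) :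
    ∃ N : ℕ, 0 < N ∧ (b + c * logb 2 ((N : ℝ) + 1)) / N ≤ δ := by
  obtain ⟨N, hN⟩ := eventually_atTop.1 (((tendsto_add_mul_logb_add_one_div_atTop b c).comp
    tendsto_natCast_atTop_atTop).eventually (ge_mem_nhds hδ))
  exact ⟨N + 1, N.succ_pos, hN (N + 1) N.le_succ⟩

theorem IsCompact.exists_pos_forall_sub_lt_of_forall_le {X : Type*} [TopologicalSpace X]
    [T2Space X] {P : Set X} (hP : IsCompact P) {f g : X → ℝ} (hf : ContinuousOn f P)
    (hg : ContinuousOn g P) {r c : ℝ} (h : ∀ x ∈ P, r ≤ f x → c ≤ g x) {η : ℝ} (hη : 0 < η) :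
    ∃ δ > 0, ∀ x ∈ P, r - δ ≤ f x → c - η < g x := by
  set S := P ∩ g ⁻¹' Set.Iic (c - η)
  have hS : IsCompact S :=
    hP.of_isClosed_subset (hg.preimage_isClosed_of_isClosed hP.isClosed isClosed_Iic)
      Set.inter_subset_left
  rcases S.eq_empty_or_nonempty with hS0 | hSne
  · refine ⟨1, one_pos, fun x hx _ => not_le.1 fun hgx => ?_⟩
    exact hS0.subset ⟨hx, hgx⟩
  obtain ⟨x₀, hx₀, hmax⟩ := hS.exists_isMaxOn hSne (hf.mono Set.inter_subset_left)
  have hfx₀ : f x₀ < r := not_le.1 fun hr => by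
    linarith [h x₀ hx₀.1 hr, show g x₀ ≤ c - η from hx₀.2]
  refine ⟨(r - f x₀) / 2, by linarith, fun x hx hfx => not_le.1 fun hgx => ?_⟩
  linarith [isMaxOn_iff.1 hmax x ⟨hx, hgx⟩]

section CondEnt

variable {𝒳 𝒴 : Type*} [Fintype 𝒳]

theorem le_sum_fst_of_nonneg {q : 𝒳 × 𝒴 → ℝ} (hq : 0 ≤ q) (z : 𝒳 × 𝒴) :
    q z ≤ ∑ x, q (x, z.2) :=
  single_le_sum (f := fun x => q (x, z.2)) (fun _ _ => hq _) (mem_univ z.1)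

variable [Fintype 𝒴]

theorem condEnt_add_le {q q' : 𝒳 × 𝒴 → ℝ} (hq : 0 ≤ q) (hq' : 0 ≤ q') :
    condEnt q + condEnt q' ≤ condEnt (q + q') := by
  rw [condEnt, condEnt, condEnt, ← neg_add, neg_le_neg_iff, ← sum_add_distrib]
  gcongr with z
  simp only [Pi.add_apply, sum_add_distrib, logb, ← mul_div_assoc, ← add_div]
  gcongr
  exact mul_log_div_add_le (hq z) (le_sum_fst_of_nonneg hq z) (hq' z) (le_sum_fst_of_nonneg hq' z)

theorem sum_condEnt_le_condEnt_sum {ι : Type*} (s : Finset ι) {q : ι → 𝒳 × 𝒴 → ℝ}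
    (hq : ∀ i ∈ s, 0 ≤ q i) : ∑ i ∈ s, condEnt (q i) ≤ condEnt (∑ i ∈ s, q i) := by
  have h := le_sum_of_subadditive_on_pred (fun q => -condEnt q) (0 ≤ ·)
    (by simp [condEnt]) (fun q q' hq hq' => by linarith [condEnt_add_le hq hq'])
    (fun _ _ => add_nonneg) q hq
  simpa [sum_neg_distrib] using h

theorem condEnt_smul (a : ℝ) (q : 𝒳 × 𝒴 → ℝ) : condEnt (a • q) = a * condEnt q := by
  rcases eq_or_ne a 0 with rfl | ha
  · simp [condEnt]
  simp only [condEnt, Pi.smul_apply, smul_eq_mul, ← mul_sum, mul_div_mul_left _ _ ha, mul_assoc,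
    mul_neg]

theorem condEnt_eq_sum_negMulLog_sub {q : 𝒳 × 𝒴 → ℝ} (hq : 0 ≤ q) :
    condEnt q = (∑ z, negMulLog (q z) - ∑ y, negMulLog (∑ x, q (x, y))) / log 2 := by
  have hterm : ∀ z : 𝒳 × 𝒴, q z * log (q z / ∑ x, q (x, z.2)) =
      q z * log (q z) - q z * log (∑ x, q (x, z.2)) := by
    intro z
    rcases (hq z).eq_or_lt with h0 | h0
    · simp [← h0]
    rw [log_div h0.ne' (h0.trans_le (le_sum_fst_of_nonneg hq z)).ne', mul_sub]
  have hmarg : ∑ z : 𝒳 × 𝒴, q z * log (∑ x, q (x, z.2)) =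
      ∑ y, (∑ x, q (x, y)) * log (∑ x, q (x, y)) := by
    rw [Fintype.sum_prod_type_right]
    simp [sum_mul]
  simp only [condEnt, logb, ← mul_div_assoc, ← sum_div, hterm, sum_sub_distrib, hmarg,
    negMulLog, neg_mul, sum_neg_distrib]
  ring

theorem continuousOn_condEnt : ContinuousOn condEnt {q : 𝒳 × 𝒴 → ℝ | 0 ≤ q} := by
  refine ContinuousOn.congr ?_ fun q hq => condEnt_eq_sum_negMulLog_sub hq
  refine Continuous.continuousOn (Continuous.div_const (Continuous.sub ?_ ?_) _)
  · exact continuous_finsetSum _ fun z _ => continuous_negMulLog.comp (continuous_apply z)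
  · exact continuous_finsetSum _ fun y _ =>
      continuous_negMulLog.comp (continuous_finsetSum _ fun x _ => continuous_apply (x, y))

end CondEnt

section Divergence

variable {α : Type*} [Fintype α]

theorem klDiv_nonneg {q p : α → ℝ} (hq : 0 ≤ q) (hp : 0 ≤ p) (hqp : ∀ a, p a = 0 → q a = 0)
    (hsum : ∑ a, p a ≤ ∑ a, q a) : 0 ≤ klDiv q p := by
  have h : 0 ≤ ∑ a, (q a - p a) := by rw [sum_sub_distrib]; linarith
  simp only [klDiv, logb, ← mul_div_assoc, ← sum_div]
  exact div_nonneg (h.trans (sum_le_sum fun a _ => sub_le_mul_log_div (hq a) (hp a) (hqp a)))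
    (log_nonneg one_le_two)

theorem continuous_klDiv_left (p : α → ℝ) : Continuous fun q : α → ℝ => klDiv q p :=
  continuous_finsetSum _ fun a _ => (continuous_mul_logb_div 2 (p a)).comp (continuous_apply a)

def absContSimplex (p : α → ℝ) : Set (α → ℝ) :=
  {q | (∀ v, 0 ≤ q v) ∧ (∑ v, q v = 1) ∧ (∀ v, p v = 0 → q v = 0)}

theorem isCompact_absContSimplex (p : α → ℝ) : IsCompact (absContSimplex p) := by
  have h : absContSimplex p = stdSimplex ℝ α ∩ {q | ∀ v, p v = 0 → q v = 0} := by
    ext q; simp [absContSimplex, stdSimplex, and_assoc]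
  rw [h, Set.ofPred_forall]
  refine (isCompact_stdSimplex ℝ α).inter_right (isClosed_iInter fun v => ?_)
  simp only [Set.ofPred_forall]
  exact isClosed_iInter fun _ => isClosed_eq (continuous_apply v) continuous_const

end Divergence

section Exponent

variable {𝒳 𝒴 : Type*} [Fintype 𝒳] [Fintype 𝒴]

/-- The exponent `E^u_{si,b}(r)` of the paper. -/
noncomputable def condEntExponent (p : 𝒳 × 𝒴 → ℝ) (r : ℝ) : ℝ :=
  sInf {z : ℝ | ∃ q, q ∈ absContSimplex p ∧ r ≤ condEnt q ∧ z = klDiv q p}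

theorem condEntExponent_le_klDiv {p : 𝒳 × 𝒴 → ℝ} (hp : 0 ≤ p) (hpsum : ∑ z, p z = 1) {r : ℝ}
    {q : 𝒳 × 𝒴 → ℝ} (hq : q ∈ absContSimplex p) (hr : r ≤ condEnt q) :
    condEntExponent p r ≤ klDiv q p := by
  refine csInf_le ⟨0, ?_⟩ ⟨q, hq, hr, rfl⟩
  rintro _ ⟨q', ⟨hq'0, hq'1, hq'p⟩, -, rfl⟩
  exact klDiv_nonneg hq'0 hp hq'p (by rw [hpsum, hq'1])

theorem exists_pos_condEntExponent_sub_lt_klDiv {p : 𝒳 × 𝒴 → ℝ} (hp : 0 ≤ p)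
    (hpsum : ∑ z, p z = 1) (r : ℝ) {η : ℝ} (hη : 0 < η) :
    ∃ δ > 0, ∀ q ∈ absContSimplex p, r - δ ≤ condEnt q → condEntExponent p r - η < klDiv q p :=
  (isCompact_absContSimplex p).exists_pos_forall_sub_lt_of_forall_le
    (continuousOn_condEnt.mono fun _ hq => hq.1) (continuous_klDiv_left p).continuousOn
    (fun _ hq hr => condEntExponent_le_klDiv hp hpsum hq hr) hη

end Exponent

section MethodOfTypes

variable {ι α : Type*} [Fintype ι]

/-- The type of `w` in the sense of the method of types, as occurrence counts. -/
noncomputable def typeCount (w : ι → α) (a : α) : ℕ := #{i | w i = a}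

noncomputable def typeDist (w : ι → α) (a : α) : ℝ := typeCount w a / Fintype.card ι

theorem typeCount_le_card (w : ι → α) (a : α) : typeCount w a ≤ Fintype.card ι :=
  card_filter_le _ _

theorem typeCount_eq_zero_iff {w : ι → α} {a : α} : typeCount w a = 0 ↔ ∀ i, w i ≠ a := by
  simp [typeCount, filter_eq_empty_iff]

theorem card_mul_typeDist (w : ι → α) (a : α) :
    (Fintype.card ι : ℝ) * typeDist w a = typeCount w a := by
  rcases (Fintype.card ι).eq_zero_or_pos with h | h
  · have : IsEmpty ι := Fintype.card_eq_zero_iff.1 h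
    simp [typeDist, typeCount]
  · exact mul_div_cancel₀ _ (by positivity)

theorem typeDist_nonneg (w : ι → α) : 0 ≤ typeDist w := fun _ => by
  unfold typeDist; positivity

variable [Fintype α]

theorem sum_comp_eq_sum_typeCount_smul {M : Type*} [AddCommMonoid M] (w : ι → α) (f : α → M) :
    ∑ i, f (w i) = ∑ a, typeCount w a • f a := by
  rw [← sum_fiberwise' univ w f]
  simp [typeCount]

theorem sum_typeCount (w : ι → α) : ∑ a, typeCount w a = Fintype.card ι := by
  have h := sum_comp_eq_sum_typeCount_smul w fun _ => (1 : ℕ)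
  simp only [smul_eq_mul, mul_one, sum_const, card_univ] at h
  exact h.symm

theorem sum_typeDist (w : ι → α) : ∑ a, typeDist w a = Fintype.card ι / Fintype.card ι := by
  simp only [typeDist, ← sum_div, ← Nat.cast_sum, sum_typeCount]

theorem typeDist_mem_absContSimplex [Nonempty ι] {w : ι → α} {p : α → ℝ}
    (hw : ∀ i, p (w i) ≠ 0) : typeDist w ∈ absContSimplex p := by
  refine ⟨typeDist_nonneg w, by simp [sum_typeDist], fun a ha => ?_⟩
  have : typeCount w a = 0 := typeCount_eq_zero_iff.2 fun i hi => hw i (hi ▸ ha)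
  simp [typeDist, this]

theorem prod_eq_prod_typeDist_mul_rpow_klDiv {w : ι → α} {p : α → ℝ} (hw : ∀ i, 0 < p (w i)) :
    ∏ i, p (w i) =
      (∏ i, typeDist w (w i)) * 2 ^ (-(Fintype.card ι : ℝ) * klDiv (typeDist w) p) := by
  have hq : ∀ i, 0 < typeDist w (w i) := fun i => by
    have : typeCount w (w i) ≠ 0 := fun h => typeCount_eq_zero_iff.1 h i rfl
    exact div_pos (Nat.cast_pos.2 (Nat.pos_of_ne_zero this))
      (Nat.cast_pos.2 (Fintype.card_pos_iff.2 ⟨i⟩))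
  have hpoint : ∀ i, p (w i) =
      typeDist w (w i) * 2 ^ (-logb 2 (typeDist w (w i) / p (w i))) := fun i => by
    rw [rpow_neg zero_le_two, rpow_logb two_pos one_lt_two.ne' (div_pos (hq i) (hw i)),
      inv_div, mul_div_cancel₀ _ (hq i).ne']
  have hexp : ∑ i, -logb 2 (typeDist w (w i) / p (w i)) =
      -(Fintype.card ι : ℝ) * klDiv (typeDist w) p := by
    rw [sum_comp_eq_sum_typeCount_smul w (fun a => -logb 2 (typeDist w a / p a)), klDiv,
      mul_sum]
    refine sum_congr rfl fun a _ => ?_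
    rw [nsmul_eq_mul, ← card_mul_typeDist]
    ring
  rw [prod_congr rfl fun i _ => hpoint i, prod_mul_distrib, ← rpow_sum_of_pos two_pos, hexp]

theorem sum_prod_typeDist_le [DecidableEq ι] :
    ∑ w : ι → α, ∏ i, typeDist w (w i) ≤ ((Fintype.card ι : ℝ) + 1) ^ Fintype.card α := by
  set T := univ.image (typeCount : (ι → α) → α → ℕ)
  have hfiber : ∀ t ∈ T,
      ∑ w ∈ (univ : Finset (ι → α)) with typeCount w = t, ∏ i, typeDist w (w i) ≤ 1 := by
    intro t ht
    obtain ⟨w₀, -, rfl⟩ := mem_image.1 ht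
    calc ∑ w ∈ (univ : Finset (ι → α)) with typeCount w = typeCount w₀, ∏ i, typeDist w (w i)
        = ∑ w ∈ (univ : Finset (ι → α)) with typeCount w = typeCount w₀,
            ∏ i, typeDist w₀ (w i) := by
          refine sum_congr rfl fun w hw => ?_
          simp only [typeDist, (mem_filter.1 hw).2]
      _ ≤ ∑ w : ι → α, ∏ i, typeDist w₀ (w i) :=
          sum_le_sum_of_subset_of_nonneg (filter_subset _ _)
            fun w _ _ => prod_nonneg fun i _ => typeDist_nonneg w₀ (w i)
      _ = (∑ a, typeDist w₀ a) ^ Fintype.card ι := by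
          rw [← Fintype.prod_sum, prod_const, card_univ]
      _ ≤ 1 := by
          rw [sum_typeDist]
          exact pow_le_one₀ (by positivity) (div_self_le_one _)
  have hT : #T ≤ (Fintype.card ι + 1) ^ Fintype.card α := by
    calc #T ≤ #(Fintype.piFinset fun _ : α => range (Fintype.card ι + 1)) := by
          refine card_le_card fun t ht => ?_
          obtain ⟨w, -, rfl⟩ := mem_image.1 ht
          simpa [Nat.lt_succ_iff] using typeCount_le_card w
      _ = (Fintype.card ι + 1) ^ Fintype.card α := by simp
  calc ∑ w : ι → α, ∏ i, typeDist w (w i)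
      = ∑ t ∈ T, ∑ w ∈ (univ : Finset (ι → α)) with typeCount w = t, ∏ i, typeDist w (w i) :=
        (sum_fiberwise_of_maps_to (fun w _ => mem_image_of_mem _ (mem_univ w)) _).symm
    _ ≤ #T • (1 : ℝ) := sum_le_card_nsmul _ _ _ hfiber
    _ ≤ ((Fintype.card ι : ℝ) + 1) ^ Fintype.card α := by
        rw [nsmul_one]; exact_mod_cast hT

theorem sum_ite_prod_le_of_le_klDiv [DecidableEq ι] [Nonempty ι] {p : α → ℝ} (hp : 0 ≤ p)
    (P : (ι → α) → Prop) [DecidablePred P] {E : ℝ}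
    (hE : ∀ w, P w → typeDist w ∈ absContSimplex p → E ≤ klDiv (typeDist w) p) :
    ∑ w : ι → α, (if P w then ∏ i, p (w i) else 0) ≤
      2 ^ (-(Fintype.card ι : ℝ) * E) * ((Fintype.card ι : ℝ) + 1) ^ Fintype.card α := by
  have hterm : ∀ w : ι → α, (if P w then ∏ i, p (w i) else 0) ≤
      2 ^ (-(Fintype.card ι : ℝ) * E) * ∏ i, typeDist w (w i) := by
    intro w
    have hrhs : 0 ≤ 2 ^ (-(Fintype.card ι : ℝ) * E) * ∏ i, typeDist w (w i) :=
      mul_nonneg (rpow_nonneg zero_le_two _) (prod_nonneg fun i _ => typeDist_nonneg w _)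
    split_ifs with hPw
    · by_cases hw : ∀ i, p (w i) ≠ 0
      · rw [prod_eq_prod_typeDist_mul_rpow_klDiv fun i => (hp _).lt_of_ne' (hw i), mul_comm]
        refine mul_le_mul_of_nonneg_right (rpow_le_rpow_of_exponent_le one_le_two ?_)
          (prod_nonneg fun i _ => typeDist_nonneg w _)
        rw [neg_mul, neg_mul, neg_le_neg_iff]
        exact mul_le_mul_of_nonneg_left (hE w hPw (typeDist_mem_absContSimplex hw)) (by positivity)
      · push Not at hw
        obtain ⟨i, hi⟩ := hw
        rw [prod_eq_zero (mem_univ i) hi]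
        exact hrhs
    · exact hrhs
  calc _ ≤ ∑ w : ι → α, 2 ^ (-(Fintype.card ι : ℝ) * E) * ∏ i, typeDist w (w i) :=
        sum_le_sum fun w _ => hterm w
    _ ≤ _ := by
        rw [← mul_sum]
        exact mul_le_mul_of_nonneg_left sum_prod_typeDist_le (rpow_nonneg zero_le_two _)

end MethodOfTypes

section Blocks

variable {𝒳 𝒴 : Type*} [Fintype 𝒳] [Fintype 𝒴]

theorem empDist_eq_typeDist {N : ℕ} (xv : Fin N → 𝒳) (yv : Fin N → 𝒴) :
    empDist xv yv = typeDist fun k => (xv k, yv k) := by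
  ext z
  simp [empDist, typeDist, typeCount]

theorem condEnt_typeCount {ι : Type*} [Fintype ι] (w : ι → 𝒳 × 𝒴) :
    condEnt (fun z => (typeCount w z : ℝ)) = Fintype.card ι * condEnt (typeDist w) := by
  rw [← condEnt_smul]
  congr 1
  ext z
  simp [card_mul_typeDist]

theorem typeCount_prod {κ ι α : Type*} [Fintype κ] [Fintype ι] (v : κ × ι → α) (a : α) :
    typeCount v a = ∑ i, typeCount (fun k => v (i, k)) a := by
  simp only [typeCount, card_filter, Fintype.sum_prod_type]

theorem sub_lt_condEnt_typeDist_of_lt_sum {κ : Type*} [Fintype κ] {N : ℕ}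
    {l : (Fin N → 𝒳) → (Fin N → 𝒴) → ℝ} {η r : ℝ}
    (hl : ∀ xv yv, l xv yv ≤ N * (condEnt (empDist xv yv) + η)) {v : κ × Fin N → 𝒳 × 𝒴}
    (hv : Fintype.card κ * N * r < ∑ i, l (fun k => (v (i, k)).1) (fun k => (v (i, k)).2)) :
    r - η < condEnt (typeDist v) := by
  set c : κ → 𝒳 × 𝒴 → ℝ := fun i z => typeCount (fun k => v (i, k)) z
  have hblock : ∀ i,
      l (fun k => (v (i, k)).1) (fun k => (v (i, k)).2) - N * η ≤ condEnt (c i) := by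
    intro i
    have := hl (fun k => (v (i, k)).1) (fun k => (v (i, k)).2)
    rw [condEnt_typeCount, Fintype.card_fin, ← empDist_eq_typeDist]
    linarith
  have hsum : ∑ i, c i = fun z => (typeCount v z : ℝ) := by
    ext z
    simp [c, typeCount_prod v z]
  have h := sum_condEnt_le_condEnt_sum univ fun i _ => (fun z => Nat.cast_nonneg _ : 0 ≤ c i)
  rw [hsum, condEnt_typeCount, Fintype.card_prod, Fintype.card_fin] at h
  have hlt :
      (Fintype.card κ * N : ℝ) * (r - η) < (Fintype.card κ * N : ℝ) * condEnt (typeDist v) := by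
    calc (Fintype.card κ * N : ℝ) * (r - η)
        < ∑ i, (l (fun k => (v (i, k)).1) (fun k => (v (i, k)).2) - N * η) := by
          rw [sum_sub_distrib, sum_const, card_univ, nsmul_eq_mul]; linarith
      _ ≤ ∑ i, condEnt (c i) := sum_le_sum fun i _ => hblock i
      _ ≤ _ := by exact_mod_cast h
  exact lt_of_mul_lt_mul_left hlt (by positivity)

end Blocks

theorem accumulated_length_large_deviations_general
    {𝒳 𝒴 : Type*} [Fintype 𝒳] [Fintype 𝒴]
    (p : 𝒳 × 𝒴 → ℝ) (hp : ∀ z, 0 ≤ p z) (hpsum : ∑ z, p z = 1)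
    (r : ℝ) (ε : ℝ) (hε : 0 < ε) :
    ∃ N : ℕ, 0 < N ∧ ∃ K : ℝ,
      ∀ l : (Fin N → 𝒳) → (Fin N → 𝒴) → ℝ,
        (∀ (xv : Fin N → 𝒳) (yv : Fin N → 𝒴),
          (N : ℝ) * condEnt (empDist xv yv) ≤ l xv yv ∧
          l xv yv ≤ (N : ℝ) * (condEnt (empDist xv yv)
            + (2 + (Fintype.card 𝒳 : ℝ) * (Fintype.card 𝒴 : ℝ)
                * Real.logb 2 ((N : ℝ) + 1)) / (N : ℝ))) →
        ∀ n : ℕ, 1 ≤ n →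
          (∑ w : Fin n → Fin N → 𝒳 × 𝒴,
            if (n : ℝ) * (N : ℝ) * r
                < ∑ i, l (fun k => (w i k).1) (fun k => (w i k).2)
            then ∏ i, ∏ k, p (w i k) else 0)
          ≤ K * 2 ^ (-(n : ℝ) * (N : ℝ) *
              (sInf {z : ℝ | ∃ q : 𝒳 × 𝒴 → ℝ,
                  ((∀ v, 0 ≤ q v) ∧ (∑ v, q v = 1) ∧ (∀ v, p v = 0 → q v = 0)) ∧
                  r ≤ condEnt q ∧ z = klDiv q p} - ε)) := by
  obtain ⟨δ, hδ, hexp⟩ := exists_pos_condEntExponent_sub_lt_klDiv hp hpsum r (half_pos hε)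
  obtain ⟨N, hN, hover⟩ :=
    exists_pos_add_mul_logb_div_le 2 (Fintype.card 𝒳 * Fintype.card 𝒴 : ℝ) hδ
  obtain ⟨C, hC⟩ := exists_add_one_pow_le_mul_two_rpow (Fintype.card (𝒳 × 𝒴)) (half_pos hε)
  refine ⟨N, hN, C, fun l hl n hn => ?_⟩
  have : Nonempty (Fin n × Fin N) := ⟨(⟨0, hn⟩, ⟨0, hN⟩)⟩
  have hlong : ∀ v : Fin n × Fin N → 𝒳 × 𝒴,
      (n : ℝ) * N * r < ∑ i, l (fun k => (v (i, k)).1) (fun k => (v (i, k)).2) →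
        r - δ ≤ condEnt (typeDist v) := fun v hv => by
    have := sub_lt_condEnt_typeDist_of_lt_sum (fun xv yv => (hl xv yv).2)
      (show (Fintype.card (Fin n) : ℝ) * N * r < _ by simpa using hv)
    linarith
  have hsanov := sum_ite_prod_le_of_le_klDiv hp
    (fun v => (n : ℝ) * N * r < ∑ i, l (fun k => (v (i, k)).1) (fun k => (v (i, k)).2))
    fun v hv hmem => (hexp _ hmem (hlong v hv)).le
  simp only [Fintype.card_prod (Fin n) (Fin N), Fintype.card_fin, Nat.cast_mul,
    Fintype.prod_prod_type] at hsanov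
  rw [← (Equiv.curry (Fin n) (Fin N) (𝒳 × 𝒴)).sum_comp]
  simp only [Equiv.curry_apply, Function.curry_apply]
  show _ ≤ C * 2 ^ (-(n : ℝ) * N * (condEntExponent p r - ε))
  calc _ ≤ _ := hsanov
    _ ≤ 2 ^ (-(n * N : ℝ) * (condEntExponent p r - ε / 2)) * (C * 2 ^ (ε / 2 * (n * N))) :=
        mul_le_mul_of_nonneg_left (hC (n * N) (by positivity)) (rpow_nonneg zero_le_two _)
    _ = C * 2 ^ (-(n : ℝ) * N * (condEntExponent p r - ε)) := by
        rw [mul_left_comm, ← rpow_add two_pos]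
        ring_nf

/-- Lemma 1, large-deviations bound for accumulated codeword lengths:
for `H(p_{X|Y}) < r < log₂|𝒳|` and `ε > 0` there exist a block length `N` and `K < ∞`
such that any fixed-to-variable code whose lengths are sandwiched between the empirical
conditional entropy and that plus the `(2 + |𝒳||𝒴|log₂(N+1))/N` overhead satisfies
`P(Σ_{i=1}^n l(X⃗_i,Y⃗_i) > nNr) ≤ K·2^{−nN(E^u_{si,b}(r) − ε)}`, where
`E^u_{si,b}(r) = min_{q : H(q_{X|Y}) ≥ r} D(q‖p)`. -/
theorem accumulated_length_large_deviations
    {𝒳 𝒴 : Type*} [Fintype 𝒳] [Fintype 𝒴] [Nonempty 𝒳] [Nonempty 𝒴]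
    (p : 𝒳 × 𝒴 → ℝ) (hp : ∀ z, 0 ≤ p z) (hpsum : ∑ z, p z = 1)
    (r : ℝ) (hr1 : condEnt p < r) (hr2 : r < Real.logb 2 (Fintype.card 𝒳))
    (ε : ℝ) (hε : 0 < ε) :
    ∃ N : ℕ, 0 < N ∧ ∃ K : ℝ,
      ∀ l : (Fin N → 𝒳) → (Fin N → 𝒴) → ℝ,
        (∀ (xv : Fin N → 𝒳) (yv : Fin N → 𝒴),
          (N : ℝ) * condEnt (empDist xv yv) ≤ l xv yv ∧
          l xv yv ≤ (N : ℝ) * (condEnt (empDist xv yv)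
            + (2 + (Fintype.card 𝒳 : ℝ) * (Fintype.card 𝒴 : ℝ)
                * Real.logb 2 ((N : ℝ) + 1)) / (N : ℝ))) →
        ∀ n : ℕ, 1 ≤ n →
          (∑ w : Fin n → Fin N → 𝒳 × 𝒴,
            if (n : ℝ) * (N : ℝ) * r
                < ∑ i, l (fun k => (w i k).1) (fun k => (w i k).2)
            then ∏ i, ∏ k, p (w i k) else 0)
          ≤ K * 2 ^ (-(n : ℝ) * (N : ℝ) *
              (sInf {z : ℝ | ∃ q : 𝒳 × 𝒴 → ℝ,
                  ((∀ v, 0 ≤ q v) ∧ (∑ v, q v = 1) ∧ (∀ v, p v = 0 → q v = 0)) ∧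
                  r ≤ condEnt q ∧ z = klDiv q p} - ε)) :=
  accumulated_length_large_deviations_general p hp hpsum r ε hε
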